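/- Let P be the polynomial ring ℂ[a, b, c₀, c₁, d, u₁,…,u_m] and set f₀ = c₀a, f₁ = c₁a, g = c₀d − c₁b. Then the zero set V(f₀, f₁, g) equals the union V(c₀, c₁) ∪ V(a, c₀d − c₁b), and this holds as an equality of ideals after taking radicals: √(f₀, f₁, g) = (c₀, c₁) ∩ √(a, c₀d − c₁b). -/
import Mathlib


open MvPolynomial

private lemma sub_aeval_mem' {σ R : Type*} [CommRing R] (s : Set σ) [DecidablePred (· ∈ s)]
    (p : MvPolynomial σ R) :
    p - aeval (fun i => if i ∈ s then 0 else X i : σ → MvPolynomial σ R) p ∈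
      Ideal.span (X '' s : Set (MvPolynomial σ R)) := by
  induction p using MvPolynomial.induction_on with
  | C a => simp
  | add p q hp hq =>
      have := Ideal.add_mem _ hp hq
      convert this using 1
      simp [map_add]
      ring
  | mul_X p i hp =>
      by_cases hi : i ∈ s
      · have hXi : (X i : MvPolynomial σ R) ∈ Ideal.span (X '' s : Set (MvPolynomial σ R)) :=
          Ideal.subset_span ⟨i, hi, rfl⟩
        have h1 : p * X i ∈ Ideal.span (X '' s : Set (MvPolynomial σ R)) :=
          Ideal.mul_mem_left _ _ hXi
        have h2 : aeval (fun i => if i ∈ s then 0 else X i : σ → MvPolynomial σ R) (p * X i) = 0 := by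
          rw [map_mul, aeval_X, if_pos hi, mul_zero]
        rw [h2, sub_zero]; exact h1
      · have h2 : aeval (fun i => if i ∈ s then 0 else X i : σ → MvPolynomial σ R) (p * X i)
            = aeval (fun i => if i ∈ s then 0 else X i : σ → MvPolynomial σ R) p * X i := by
          rw [map_mul, aeval_X, if_neg hi]
        rw [h2]
        have h3 : p * X i - aeval (fun i => if i ∈ s then 0 else X i : σ → MvPolynomial σ R) p * X i
            = (p - aeval (fun i => if i ∈ s then 0 else X i : σ → MvPolynomial σ R) p) * X i := by
          ring
        rw [h3]
        exact Ideal.mul_mem_right _ _ hp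

private lemma radical_span_X' {σ : Type*} (s : Set σ) :
    (Ideal.span (X '' s : Set (MvPolynomial σ ℂ))).radical
      = Ideal.span (X '' s : Set (MvPolynomial σ ℂ)) := by
  classical
  refine le_antisymm ?_ Ideal.le_radical
  intro p hp
  obtain ⟨n, hn⟩ := hp
  set φ : MvPolynomial σ ℂ →ₐ[ℂ] MvPolynomial σ ℂ := aeval (fun i => if i ∈ s then 0 else X i : σ → MvPolynomial σ ℂ) with hφ
  have hker : Ideal.span (X '' s : Set (MvPolynomial σ ℂ)) ≤ RingHom.ker (φ : MvPolynomial σ ℂ →+* MvPolynomial σ ℂ) := by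
    rw [Ideal.span_le]
    rintro x ⟨i, hi, rfl⟩
    simp [RingHom.mem_ker, hφ, hi]
  rcases Nat.eq_zero_or_pos n with rfl | hpos
  · have h1 : (1 : MvPolynomial σ ℂ) ∈ Ideal.span (X '' s : Set (MvPolynomial σ ℂ)) := by
      simpa using hn
    have := (Ideal.eq_top_iff_one _).mpr h1
    rw [this]; trivial
  · have hφp : φ p = 0 := by
      have : φ p ^ n = 0 := by
        have := hker hn
        rwa [RingHom.mem_ker, map_pow] at this
      exact pow_eq_zero_iff hpos.ne' |>.mp this
    have := sub_aeval_mem' s p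
    rwa [← hφ, hφp, sub_zero] at this

/-- In `P = ℂ[a, b, c₀, c₁, d, u₁,…,u_m]`, with `f₀ = c₀a`, `f₁ = c₁a`,
`g = c₀d − c₁b`, the zero set `V(f₀, f₁, g)` equals `V(c₀, c₁) ∪ V(a, g)`, and on the
level of ideals `√(f₀, f₁, g) = (c₀, c₁) ∩ √(a, g)`. -/
theorem stmt_14 (m : ℕ) :
    let P := MvPolynomial (Fin 5 ⊕ Fin m) ℂ
    let a : P := X (Sum.inl 0)
    let b : P := X (Sum.inl 1)
    let c₀ : P := X (Sum.inl 2)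
    let c₁ : P := X (Sum.inl 3)
    let d : P := X (Sum.inl 4)
    let f₀ := c₀ * a
    let f₁ := c₁ * a
    let g := c₀ * d - c₁ * b
    (∀ x : (Fin 5 ⊕ Fin m) → ℂ,
        (eval x f₀ = 0 ∧ eval x f₁ = 0 ∧ eval x g = 0) ↔
          ((eval x c₀ = 0 ∧ eval x c₁ = 0) ∨ (eval x a = 0 ∧ eval x g = 0))) ∧
      (Ideal.span {f₀, f₁, g}).radical =
        Ideal.span {c₀, c₁} ⊓ (Ideal.span {a, g}).radical := by
  intro P a b c₀ c₁ d f₀ f₁ g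
  constructor
  · intro x
    simp only [f₀, f₁, g, map_mul, map_sub]
    constructor
    · rintro ⟨h0, h1, hg⟩
      rcases mul_eq_zero.1 h0 with h | h
      · rcases mul_eq_zero.1 h1 with h' | h'
        · exact Or.inl ⟨h, h'⟩
        · exact Or.inr ⟨h', hg⟩
      · exact Or.inr ⟨h, hg⟩
    · rintro (⟨h0, h1⟩ | ⟨ha, hg⟩)
      · refine ⟨by rw [h0]; ring, by rw [h1]; ring, by rw [h0, h1]; ring⟩
      · exact ⟨by rw [ha]; ring, by rw [ha]; ring, hg⟩
  · set I := Ideal.span {c₀, c₁} with hI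
    set J := Ideal.span {a, g} with hJ
    set K := Ideal.span {f₀, f₁, g} with hK
    have hc₀ : c₀ ∈ I := Ideal.subset_span (by simp)
    have hc₁ : c₁ ∈ I := Ideal.subset_span (by simp)
    have haJ : a ∈ J := Ideal.subset_span (by simp)
    have hgJ : g ∈ J := Ideal.subset_span (by simp)
    have hIX : I = Ideal.span (X '' ({Sum.inl 2, Sum.inl 3} : Set (Fin 5 ⊕ Fin m)) : Set P) := by
      rw [hI, Set.image_insert_eq, Set.image_singleton]
    have hIrad : I.radical = I := by rw [hIX]; exact radical_span_X' _
    have hKI : K ≤ I := by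
      rw [hK, Ideal.span_le]
      rintro x hx
      simp only [Set.mem_insert_iff, Set.mem_singleton_iff] at hx
      rcases hx with rfl | rfl | rfl
      · exact Ideal.mul_mem_right _ _ hc₀
      · exact Ideal.mul_mem_right _ _ hc₁
      · exact sub_mem (Ideal.mul_mem_right _ _ hc₀) (Ideal.mul_mem_right _ _ hc₁)
    have hKJ : K ≤ J := by
      rw [hK, Ideal.span_le]
      rintro x hx
      simp only [Set.mem_insert_iff, Set.mem_singleton_iff] at hx
      rcases hx with rfl | rfl | rfl
      · exact Ideal.mul_mem_left _ _ haJ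
      · exact Ideal.mul_mem_left _ _ haJ
      · exact hgJ
    have hf₀K : f₀ ∈ K := Ideal.subset_span (by simp)
    have hf₁K : f₁ ∈ K := Ideal.subset_span (by simp)
    have hgK : g ∈ K := Ideal.subset_span (by simp)
    have hIJK : I * J ≤ K := by
      rw [Ideal.mul_le]
      intro r hr s hs
      induction hr using Submodule.span_induction with
      | mem x hx =>
          induction hs using Submodule.span_induction with
          | mem y hy =>
              simp only [Set.mem_insert_iff, Set.mem_singleton_iff] at hx hy
              rcases hx with rfl | rfl <;> rcases hy with rfl | rfl
              · exact hf₀K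
              · exact Ideal.mul_mem_left _ _ hgK
              · exact hf₁K
              · exact Ideal.mul_mem_left _ _ hgK
          | zero => simp
          | add y z _ _ hy hz => rw [mul_add]; exact K.add_mem hy hz
          | smul t y _ hy =>
              rw [smul_eq_mul, mul_comm t y, ← mul_assoc]
              exact Ideal.mul_mem_right _ _ hy
      | zero => simp
      | add y z _ _ hy hz => rw [add_mul]; exact K.add_mem hy hz
      | smul t y _ hy =>
          rw [smul_eq_mul, mul_assoc]
          exact Ideal.mul_mem_left _ _ hy
    refine le_antisymm ?_ ?_
    · exact le_inf (hIrad ▸ Ideal.radical_mono hKI) (Ideal.radical_mono hKJ)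
    · calc I ⊓ J.radical = I.radical ⊓ J.radical := by rw [hIrad]
        _ = (I * J).radical := (Ideal.radical_mul _ _).symm
        _ ≤ K.radical := Ideal.radical_mono hIJK
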